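/- arXiv:2203.00118 — 2 statements merged into one kernel-verified Lean document; each statement's English description precedes it below -/
import Mathlib

section
/- Let K ⊆ ℝ³ be a nonempty compact set equal to the closure of its interior, let δ be a spin character of K, and let q ∈ ℍ satisfy q² = −1. Then the image under δ of the set 𝒜_q(K) of plane-spinor fields on K taking values in ℝ·1 + ℝ·q is exactly the plane ℝ·1 + ℝ·q. (Quaternionic form of the proposition that a spin character maps each subsurface spinor algebra 𝒜_B(M) onto the plane-spinor algebra 𝔸_B.) -/
/-!
A field `f` with values in `ℝ·1 + ℝ·q` splits as `f = g + h·q` with `g`, `h` real-valued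
continuous fields. Grade preservation makes `δ g` and `δ h` real, and right linearity gives
`δ f = δ g + δ h · q`, which lies in the plane. Conversely every constant in the plane is a
plane-spinor field, fixed by `δ` because `δ` is right linear and unital.
-/

noncomputable section

abbrev R3 : Type := EuclideanSpace ℝ (Fin 3)

abbrev Quat := Quaternion ℝ

def e (m : Fin 3) : R3 := EuclideanSpace.single m 1

def qi : Quat := ⟨0, 1, 0, 0⟩
def qj : Quat := ⟨0, 0, 1, 0⟩
def qk : Quat := ⟨0, 0, 0, 1⟩

/-- `f` is monogenic on `U`. -/
def MonogenicOn (f : R3 → Quat) (U : Set R3) : Prop :=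
  ∀ x ∈ U, DifferentiableAt ℝ f x ∧
    fderiv ℝ f x (e 0) + qk * fderiv ℝ f x (e 1) + qj * fderiv ℝ f x (e 2) = 0

open Classical in
/-- Extension of a continuous map on `K` by zero. -/
def extendK (K : Set R3) (f : C(K, Quat)) : R3 → Quat :=
  fun x => if h : x ∈ K then f ⟨x, h⟩ else 0

/-- `f : C(K, Quat)` is monogenic on the interior of `K`. -/
def MonogenicOnInterior (K : Set R3) (f : C(K, Quat)) : Prop :=
  MonogenicOn (extendK K f) (interior K)

/-- `w` lies in the real plane `ℝ·1 + ℝ·q`. -/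
def InPlane (q w : Quat) : Prop := ∃ a b : ℝ, w = a • 1 + b • q

/-- Plane-spinor fields on `K`. -/
def IsPlaneSpinor (K : Set R3) (f : C(K, Quat)) : Prop :=
  ∃ q : Quat, q ^ 2 = -1 ∧ (∀ x, InPlane q (f x)) ∧ MonogenicOnInterior K f

/-- Spin characters of `K`. -/
structure IsSpinCharacter (K : Set R3) (δ : C(K, Quat) → Quat) : Prop where
  continuous : Continuous δ
  map_add : ∀ f g : C(K, Quat), δ (f + g) = δ f + δ g
  map_smul_right : ∀ (f : C(K, Quat)) (a : Quat), δ (f * ContinuousMap.const _ a) = δ f * a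
  map_one : δ 1 = 1
  grade_real : ∀ f : C(K, Quat), (∀ x, ∃ a : ℝ, f x = (a : ℝ) • 1) → ∃ a : ℝ, δ f = (a : ℝ) • 1
  grade_imaginary : ∀ f : C(K, Quat), (∀ x, (f x).re = 0) → (δ f).re = 0
  map_list_prod : ∀ L : List C(K, Quat), (∀ f ∈ L, IsPlaneSpinor K f) →
    δ L.prod = (L.map δ).prod

/-- The monogenic spinor fields 𝓜⁺(K): the closure in `C(K, Quat)` of restrictions of
functions monogenic on an open neighborhood of `K`. -/
def MonSpinorFields (K : Set R3) : Set C(K, Quat) :=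
  closure { f : C(K, Quat) | ∃ U : Set R3, ∃ F : R3 → Quat,
    IsOpen U ∧ K ⊆ U ∧ MonogenicOn F U ∧ ∀ x : K, f x = F x }

/-- A compact region in ℝ³. -/
def IsCompactRegion (K : Set R3) : Prop :=
  K.Nonempty ∧ IsCompact K ∧ K = closure (interior K) ∧ IsConnected Kᶜ



/-- The plane-spinor fields on `K` with values in the plane `ℝ·1 + ℝ·q`. -/
def planeSpinorsWith (K : Set R3) (q : Quat) : Set C(K, Quat) :=
  { f | (∀ x, InPlane q (f x)) ∧ MonogenicOnInterior K f }


open Quaternion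

theorem Quaternion.re_eq_zero_of_sq_eq_neg_one {R : Type*} [Field R] [LinearOrder R]
    [IsStrictOrderedRing R] {q : ℍ[R]} (hq : q ^ 2 = -1) : q.re = 0 := by
  have h := congrArg (fun p : ℍ[R] => (p.re, p.imI, p.imJ, p.imK)) hq
  simp only [sq, re_mul, imI_mul, imJ_mul, imK_mul, re_neg, imI_neg, imJ_neg, imK_neg,
    re_one, imI_one, imJ_one, imK_one, Prod.mk.injEq] at h
  obtain ⟨h_re, h_imI, h_imJ, h_imK⟩ := h
  have key : q.re * (q.re ^ 2 + 1) = 0 := by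
    linear_combination q.re * h_re + (q.imI / 2) * h_imI + (q.imJ / 2) * h_imJ
      + (q.imK / 2) * h_imK
  exact (mul_eq_zero.mp key).resolve_right (by positivity)

/-- As `re q = 0` and `q² = -1`, the `q`-coordinate of `w` is `-re (w * q)`. -/
theorem InPlane.eq_re_smul_one_add {q w : Quat} (hq : q ^ 2 = -1) (hw : InPlane q w) :
    w = w.re • (1 : Quat) + (-(w * q)).re • q := by
  obtain ⟨a, b, rfl⟩ := hw
  have hq_re := Quaternion.re_eq_zero_of_sq_eq_neg_one hq
  have hmul : (a • (1 : Quat) + b • q) * q = a • q - b • (1 : Quat) := by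
    rw [add_mul, smul_mul_assoc, smul_mul_assoc, one_mul, ← sq, hq, smul_neg,
      sub_eq_add_neg]
  simp [hmul, hq_re]

theorem monogenicOn_const (w : Quat) (U : Set R3) : MonogenicOn (fun _ => w) U := fun _ _ =>
  ⟨differentiableAt_const w, by simp [fderiv_fun_const]⟩

theorem MonogenicOn.congr {F G : R3 → Quat} {U : Set R3} (hF : MonogenicOn F U) (hU : IsOpen U)
    (hFG : Set.EqOn F G U) : MonogenicOn G U := by
  intro x hx
  have hev : F =ᶠ[nhds x] G := Filter.eventuallyEq_of_mem (hU.mem_nhds hx) hFG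
  obtain ⟨hdiff, heq⟩ := hF x hx
  exact ⟨hdiff.congr_of_eventuallyEq hev.symm, by rwa [← hev.fderiv_eq]⟩

theorem monogenicOnInterior_const (K : Set R3) (w : Quat) :
    MonogenicOnInterior K (ContinuousMap.const K w) :=
  (monogenicOn_const w _).congr isOpen_interior fun x hx => by
    simp [extendK, interior_subset hx]

theorem const_mem_planeSpinorsWith (K : Set R3) {q w : Quat} (hw : InPlane q w) :
    ContinuousMap.const K w ∈ planeSpinorsWith K q :=
  ⟨fun _ => hw, monogenicOnInterior_const K w⟩

def ContinuousMap.rePart {X : Type*} [TopologicalSpace X] (f : C(X, Quat)) : C(X, Quat) :=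
  ⟨fun x => (f x).re • (1 : Quat), (continuous_re.comp f.continuous).smul continuous_const⟩

namespace IsSpinCharacter

variable {K : Set R3} {δ : C(K, Quat) → Quat}

theorem map_const (hδ : IsSpinCharacter K δ) (w : Quat) : δ (ContinuousMap.const K w) = w := by
  rw [← one_mul (ContinuousMap.const K w), hδ.map_smul_right, hδ.map_one, one_mul]

theorem exists_map_rePart (hδ : IsSpinCharacter K δ) (f : C(K, Quat)) :
    ∃ a : ℝ, δ f.rePart = a • 1 :=
  hδ.grade_real _ fun x => ⟨(f x).re, rfl⟩

theorem inPlane_of_forall_inPlane (hδ : IsSpinCharacter K δ) {q : Quat} (hq : q ^ 2 = -1)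
    {f : C(K, Quat)} (hf : ∀ x, InPlane q (f x)) : InPlane q (δ f) := by
  have hdecomp :
      f = f.rePart + (-(f * ContinuousMap.const K q)).rePart * ContinuousMap.const K q :=
    ContinuousMap.ext fun x => by
      simpa [ContinuousMap.rePart, smul_mul_assoc] using (hf x).eq_re_smul_one_add hq
  obtain ⟨a, ha⟩ := hδ.exists_map_rePart f
  obtain ⟨b, hb⟩ := hδ.exists_map_rePart (-(f * ContinuousMap.const K q))
  refine ⟨a, b, ?_⟩
  rw [hdecomp, hδ.map_add, hδ.map_smul_right, ha, hb, smul_mul_assoc, one_mul]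

end IsSpinCharacter

theorem character_maps_plane_spinors_onto_plane_general (K : Set R3)
    (δ : C(K, Quat) → Quat) (hδ : IsSpinCharacter K δ) (q : Quat) (hq : q ^ 2 = -1) :
    δ '' planeSpinorsWith K q = { w : Quat | InPlane q w } := by
  ext w
  constructor
  · rintro ⟨f, ⟨hf, -⟩, rfl⟩
    exact hδ.inPlane_of_forall_inPlane hq hf
  · intro hw
    exact ⟨ContinuousMap.const K w, const_mem_planeSpinorsWith K hw, hδ.map_const w⟩

/-- A spin character maps each subsurface spinor algebra `𝒜_q(K)` onto the plane
`ℝ·1 + ℝ·q`. -/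
theorem character_maps_plane_spinors_onto_plane (K : Set R3) (hne : K.Nonempty)
    (hc : IsCompact K) (hreg : K = closure (interior K))
    (δ : C(K, Quat) → Quat) (hδ : IsSpinCharacter K δ) (q : Quat) (hq : q ^ 2 = -1) :
    δ '' planeSpinorsWith K q = { w : Quat | InPlane q w } :=
  character_maps_plane_spinors_onto_plane_general K δ hδ q hq

end
end

section
/- Let U ⊆ ℝ³ be open and let f : ℝ³ → ℍ be monogenic on U and twice continuously differentiable on U. Then f is harmonic on U: for every x ∈ U, the sum over m = 0, 1, 2 of (fderiv ℝ (fun y => (fderiv ℝ f y) e_m) x) e_m equals 0. In particular each of the four real component functions of f is a harmonic function on U. (The paper's claim that each graded component of a monogenic spinor field is harmonic, since ∇² is the Laplace–Beltrami operator.) -/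
noncomputable section

/-! With `D = ∂₀ + k ∂₁ + j ∂₂` and `D̄ = ∂₀ - k ∂₁ - j ∂₂`, the relations `k² = j² = -1`,
`kj + jk = 0` and the symmetry of second derivatives of a `C²` map give `D̄ D = Δ`.
Differentiating the monogenic equation `D f = 0` on the open set `U` kills every row
`v ↦ D (∂_v f)` of the Hessian, hence `Δ f = D̄ (D f) = 0`. -/

open Topology

section Calculus

variable {𝕜 E F G : Type*} [NontriviallyNormedField 𝕜] [NormedAddCommGroup E] [NormedSpace 𝕜 E]
  [NormedAddCommGroup F] [NormedSpace 𝕜 F] [NormedAddCommGroup G] [NormedSpace 𝕜 G]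

theorem HasFDerivAt.map_apply_eq_zero_of_eventually {g : E → F} {g' : E →L[𝕜] F} {x : E}
    (hg : HasFDerivAt g g' x) (L : F →L[𝕜] G)
    (hL : ∀ᶠ y in 𝓝 x, L (g y) = 0) (v : E) : L (g' v) = 0 := by
  have hconst : HasFDerivAt (fun y => L (g y)) (0 : E →L[𝕜] G) x :=
    (hasFDerivAt_const 0 x).congr_of_eventuallyEq hL
  exact congrArg (· v) ((L.hasFDerivAt.comp x hg).unique hconst)

theorem fderiv_clm_apply_const {c : E → F →L[𝕜] G} {x : E} (hc : DifferentiableAt 𝕜 c x)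
    (u : F) (v : E) :
    fderiv 𝕜 (fun y => c y u) x v = fderiv 𝕜 c x v u := by
  simp [fderiv_clm_apply hc (differentiableAt_const u)]

end Calculus

theorem Matrix.trace_eq_zero_of_dirac_rows {A : Type*} [Ring A] {a b : A}
    (ha : a * a = -1) (hb : b * b = -1) (hab : a * b + b * a = 0)
    (H : Matrix (Fin 3) (Fin 3) A) (hH : ∀ m n, H m n = H n m)
    (hD : ∀ m, H m 0 + a * H m 1 + b * H m 2 = 0) :
    H.trace = 0 := by
  have h1 := hD 1
  have h2 := hD 2
  rw [hH 1 0] at h1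
  rw [hH 2 0, hH 2 1] at h2
  -- `D̄` applied to the rows `D (∂_m f)`, i.e. `D̄ D = Δ`
  calc H.trace
      = (H 0 0 + a * H 0 1 + b * H 0 2) - a * (H 0 1 + a * H 1 1 + b * H 1 2)
          - b * (H 0 2 + a * H 1 2 + b * H 2 2) + (a * a + 1) * H 1 1 + (b * b + 1) * H 2 2
          + (a * b + b * a) * H 1 2 := by
        rw [Matrix.trace_fin_three]; noncomm_ring
    _ = 0 := by rw [hD 0, h1, h2, ha, hb, hab]; simp

theorem qk_mul_qk : qk * qk = -1 := by
  ext <;> simp [Quaternion.re_mul, Quaternion.imI_mul, Quaternion.imJ_mul, Quaternion.imK_mul,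
    Quaternion.re_one, Quaternion.imI_one, Quaternion.imJ_one, Quaternion.imK_one] <;> simp [qk]

theorem qj_mul_qj : qj * qj = -1 := by
  ext <;> simp [Quaternion.re_mul, Quaternion.imI_mul, Quaternion.imJ_mul, Quaternion.imK_mul,
    Quaternion.re_one, Quaternion.imI_one, Quaternion.imJ_one, Quaternion.imK_one] <;> simp [qj]

theorem qk_mul_qj_add_qj_mul_qk : qk * qj + qj * qk = 0 := by
  ext <;> simp [Quaternion.re_mul, Quaternion.imI_mul, Quaternion.imJ_mul, Quaternion.imK_mul,
    Quaternion.re_zero, Quaternion.imI_zero, Quaternion.imJ_zero, Quaternion.imK_zero] <;>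
    simp [qj, qk]

/-- `diracOfFDeriv (fderiv ℝ f y)` is the Dirac operator `D f` at `y`. -/
def diracOfFDeriv : (R3 →L[ℝ] Quat) →L[ℝ] Quat :=
  ContinuousLinearMap.apply ℝ Quat (e 0) + qk • ContinuousLinearMap.apply ℝ Quat (e 1)
    + qj • ContinuousLinearMap.apply ℝ Quat (e 2)

theorem MonogenicOn.diracOfFDeriv_fderiv_fderiv_eq_zero {f : R3 → Quat} {U : Set R3}
    (hf : MonogenicOn f U) (hU : IsOpen U) {x : R3} (hx : x ∈ U)
    (hd : DifferentiableAt ℝ (fderiv ℝ f) x) (v : R3) :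
    diracOfFDeriv (fderiv ℝ (fderiv ℝ f) x v) = 0 := by
  -- the named arguments avoid a unification failure between instance paths on `R3 →L[ℝ] Quat`
  refine hd.hasFDerivAt.map_apply_eq_zero_of_eventually (𝕜 := ℝ) (F := R3 →L[ℝ] Quat)
    (G := Quat) diracOfFDeriv ?_ v
  filter_upwards [hU.mem_nhds hx] with y hy using (hf y hy).2

/-- Monogenic fields are harmonic. -/
theorem monogenic_is_harmonic (U : Set R3) (hU : IsOpen U) (f : R3 → Quat)
    (hf : MonogenicOn f U) (hf2 : ContDiffOn ℝ 2 f U) :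
    ∀ x ∈ U, (∑ m : Fin 3, fderiv ℝ (fun y => fderiv ℝ f y (e m)) x (e m)) = 0 := by
  intro x hx
  have hfx : ContDiffAt ℝ 2 f x := hf2.contDiffAt (hU.mem_nhds hx)
  have hd : DifferentiableAt ℝ (fderiv ℝ f) x :=
    (hfx.fderiv_right (m := 1) le_rfl).differentiableAt one_ne_zero
  simp_rw [fderiv_clm_apply_const hd]
  exact Matrix.trace_eq_zero_of_dirac_rows qk_mul_qk qj_mul_qj qk_mul_qj_add_qj_mul_qk
    (Matrix.of fun m n => fderiv ℝ (fderiv ℝ f) x (e m) (e n))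
    (fun m n => hfx.isSymmSndFDerivAt (by simp) _ _)
    (fun m => hf.diracOfFDeriv_fderiv_fderiv_eq_zero hU hx hd (e m))

end
end
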